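/- With the Parry measure ν on an irreducible aperiodic subshift of finite type as above, if j = J₁...J_n and k = K₁...K_n are admissible words with the same first letter (J₁ = K₁), and for every i ≥ 1 the number of admissible right-extensions of j by i letters is at least the number of admissible right-extensions of k by i letters, then ν(cyl(j)) ≥ ν(cyl(k)). -/

import Mathlib

/-!
Conjugating `A / Λ` by `diagonal v` gives the row-stochastic transition matrix `P` of the Parry
Markov chain, and `v z * (P ^ k *ᵥ v⁻¹) z` is the number of right-extensions of `z` by `k`
letters divided by `Λ ^ k`. Some power of `P` has positive entries, so by Doeblin's contraction
the vectors `P ^ k *ᵥ v⁻¹` become asymptotically constant, while staying above `min v⁻¹ > 0`.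
Comparing the extension counts of the last letters of the two words therefore gives
`v K_n ≤ v J_n`; the first letters agree, so the `u`-factors coincide.
-/

open Matrix Finset Filter Topology

section Doeblin

variable {ι : Type*} [Fintype ι] [DecidableEq ι] {Q : Matrix ι ι ℝ}

lemma le_mulVec_apply_of_mem_rowStochastic (hQ : Q ∈ rowStochastic ℝ ι) {h : ι → ℝ} {c : ℝ}
    (hc : ∀ z, c ≤ h z) (x : ι) : c ≤ (Q *ᵥ h) x := by
  calc c = ∑ z, Q x z * c := by rw [← Finset.sum_mul, sum_row_of_mem_rowStochastic hQ, one_mul]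
    _ ≤ (Q *ᵥ h) x := Finset.sum_le_sum fun z _ =>
      mul_le_mul_of_nonneg_left (hc z) (nonneg_of_mem_rowStochastic hQ)

/-- Doeblin's minorization: mass `δ` of every row is spread uniformly, so the width of the
range of `h` shrinks by the factor `1 - card ι * δ`. -/
lemma mulVec_apply_mem_Icc_of_le_apply (hQ : Q ∈ rowStochastic ℝ ι) {δ : ℝ}
    (hδ : ∀ x y, δ ≤ Q x y) {h : ι → ℝ} {a D : ℝ} (hh : ∀ z, h z ∈ Set.Icc a (a + D)) (x : ι) :
    (Q *ᵥ h) x ∈ Set.Icc ((1 - Fintype.card ι * δ) * a + δ * ∑ z, h z)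
      ((1 - Fintype.card ι * δ) * a + δ * ∑ z, h z + (1 - Fintype.card ι * δ) * D) := by
  have hsplit : (Q *ᵥ h) x = ∑ z, (Q x z - δ) * h z + δ * ∑ z, h z := by
    simp only [mulVec, dotProduct, Finset.mul_sum, ← Finset.sum_add_distrib]
    exact Finset.sum_congr rfl fun z _ => by ring
  have hmass : ∑ z, (Q x z - δ) = 1 - Fintype.card ι * δ := by
    rw [Finset.sum_sub_distrib, sum_row_of_mem_rowStochastic hQ, Finset.sum_const,
      Finset.card_univ, nsmul_eq_mul]
  have hlow : (1 - Fintype.card ι * δ) * a ≤ ∑ z, (Q x z - δ) * h z := by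
    rw [← hmass, Finset.sum_mul]
    exact Finset.sum_le_sum fun z _ =>
      mul_le_mul_of_nonneg_left (hh z).1 (sub_nonneg.2 (hδ x z))
  have hup : ∑ z, (Q x z - δ) * h z ≤ (1 - Fintype.card ι * δ) * (a + D) := by
    rw [← hmass, Finset.sum_mul]
    exact Finset.sum_le_sum fun z _ =>
      mul_le_mul_of_nonneg_left (hh z).2 (sub_nonneg.2 (hδ x z))
  rw [hsplit]
  constructor <;> linarith

lemma exists_forall_mulVec_pow_apply_mem_Icc (hQ : Q ∈ rowStochastic ℝ ι) {δ : ℝ}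
    (hδ : ∀ x y, δ ≤ Q x y) {h : ι → ℝ} {a D : ℝ} (hh : ∀ z, h z ∈ Set.Icc a (a + D)) (k : ℕ) :
    ∃ b, ∀ z, (Q ^ k *ᵥ h) z ∈ Set.Icc b (b + (1 - Fintype.card ι * δ) ^ k * D) := by
  induction k with
  | zero => exact ⟨a, by simpa using hh⟩
  | succ k ih =>
    obtain ⟨b, hb⟩ := ih
    refine ⟨(1 - Fintype.card ι * δ) * b + δ * ∑ z, (Q ^ k *ᵥ h) z, fun z => ?_⟩
    simpa only [pow_succ', ← mulVec_mulVec, mul_assoc] using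
      mulVec_apply_mem_Icc_of_le_apply hQ hδ hb z

theorem tendsto_mulVec_pow_apply_sub_apply (hQ : Q ∈ rowStochastic ℝ ι)
    (hpos : ∀ x y, 0 < Q x y) (h : ι → ℝ) (x y : ι) :
    Tendsto (fun k => (Q ^ k *ᵥ h) x - (Q ^ k *ᵥ h) y) atTop (𝓝 0) := by
  have : Nonempty ι := ⟨x⟩
  obtain ⟨⟨x₀, y₀⟩, hmin⟩ := Finite.exists_min fun p : ι × ι => Q p.1 p.2
  have hδ : ∀ i j, Q x₀ y₀ ≤ Q i j := fun i j => hmin (i, j)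
  set ρ := 1 - Fintype.card ι * Q x₀ y₀
  have hρ0 : 0 ≤ ρ := by
    have : Fintype.card ι * Q x₀ y₀ ≤ 1 :=
      calc _ = ∑ _z : ι, Q x₀ y₀ := by simp
        _ ≤ ∑ z, Q x z := Finset.sum_le_sum fun z _ => hδ x z
        _ = 1 := sum_row_of_mem_rowStochastic hQ x
    linarith
  have hρ1 : ρ < 1 := by
    have := mul_pos (Nat.cast_pos.2 Fintype.card_pos : (0 : ℝ) < Fintype.card ι) (hpos x₀ y₀)
    linarith
  set S := ∑ z, |h z|
  have hh : ∀ z, h z ∈ Set.Icc (-S) (-S + 2 * S) := fun z => by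
    have := Finset.single_le_sum (f := fun z => |h z|) (fun z _ => abs_nonneg _) (mem_univ z)
    constructor <;> linarith [abs_le.1 (this : |h z| ≤ S)]
  refine squeeze_zero_norm (fun k => ?_)
    (by simpa using (tendsto_pow_atTop_nhds_zero_of_lt_one hρ0 hρ1).mul_const (2 * S))
  obtain ⟨b, hb⟩ : ∃ b, ∀ z, (Q ^ k *ᵥ h) z ∈ Set.Icc b (b + ρ ^ k * (2 * S)) :=
    exists_forall_mulVec_pow_apply_mem_Icc hQ hδ hh k
  rw [Real.norm_eq_abs, abs_sub_le_iff]
  constructor <;> linarith [(hb x).1, (hb x).2, (hb y).1, (hb y).2]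

end Doeblin

section ParryTransition

variable {ι : Type*} [Fintype ι] {A : Matrix ι ι ℝ} {Λ : ℝ} {v : ι → ℝ}

noncomputable def parryTransition (A : Matrix ι ι ℝ) (Λ : ℝ) (v : ι → ℝ) : Matrix ι ι ℝ :=
  of fun x y => A x y * v y / (Λ * v x)

lemma parryTransition_mulVec_inv_apply_mul (hv : ∀ i, v i ≠ 0) (B : Matrix ι ι ℝ) (c : ℝ)
    (x : ι) : (parryTransition B c v *ᵥ v⁻¹) x * v x = (∑ l, B x l) / c := by
  simp only [mulVec, dotProduct, parryTransition, of_apply, Pi.inv_apply, Finset.sum_mul,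
    Finset.sum_div]
  refine Finset.sum_congr rfl fun l _ => ?_
  field_simp [hv x, hv l]

variable [DecidableEq ι]

lemma parryTransition_mem_rowStochastic (hA : ∀ i j, 0 ≤ A i j) (hΛ : 0 < Λ)
    (hv : ∀ i, 0 < v i) (hAv : A *ᵥ v = Λ • v) : parryTransition A Λ v ∈ rowStochastic ℝ ι := by
  refine mem_rowStochastic_iff_sum.2 ⟨fun i j => ?_, fun i => ?_⟩
  · exact div_nonneg (mul_nonneg (hA i j) (hv j).le) (mul_pos hΛ (hv i)).le
  · simp only [parryTransition, of_apply, ← Finset.sum_div]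
    rw [div_eq_one_iff_eq (mul_pos hΛ (hv i)).ne']
    exact congrFun hAv i

lemma semiconjBy_diagonal_parryTransition (hΛ : Λ ≠ 0) (hv : ∀ i, v i ≠ 0) :
    SemiconjBy (diagonal v) (parryTransition A Λ v) (Λ⁻¹ • A) := by
  ext x y
  simp only [diagonal_mul, mul_diagonal, parryTransition, of_apply, Matrix.smul_apply,
    smul_eq_mul]
  field_simp [hv x]

lemma parryTransition_pow (hΛ : Λ ≠ 0) (hv : ∀ i, v i ≠ 0) (k : ℕ) :
    parryTransition A Λ v ^ k = parryTransition (A ^ k) (Λ ^ k) v := by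
  ext x y
  have h := congrFun₂ ((semiconjBy_diagonal_parryTransition (A := A) hΛ hv).pow_right k) x y
  simp only [diagonal_mul, mul_diagonal, smul_pow, Matrix.smul_apply, smul_eq_mul, inv_pow] at h
  change _ = (A ^ k) x y * v y / (Λ ^ k * v x)
  rw [eq_div_iff (mul_ne_zero (pow_ne_zero k hΛ) (hv x))]
  calc _ = Λ ^ k * (v x * (parryTransition A Λ v ^ k) x y) := by ring
    _ = _ := by rw [h]; field_simp

end ParryTransition

theorem apply_le_apply_of_forall_sum_pow_apply_le {ι : Type*} [Fintype ι] [DecidableEq ι]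
    {A : Matrix ι ι ℝ} {Λ : ℝ} {v : ι → ℝ} (hA : ∀ i j, 0 ≤ A i j) {m : ℕ}
    (hm : ∀ i j, 0 < (A ^ m) i j) (hΛ : 0 < Λ) (hv : ∀ i, 0 < v i) (hAv : A *ᵥ v = Λ • v)
    {x y : ι} (hxy : ∀ k, ∑ l, (A ^ k) y l ≤ ∑ l, (A ^ k) x l) : v y ≤ v x := by
  have hv₀ : ∀ i, v i ≠ 0 := fun i => (hv i).ne'
  have hQ : parryTransition (A ^ m) (Λ ^ m) v ∈ rowStochastic ℝ ι :=
    parryTransition_pow hΛ.ne' hv₀ m ▸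
      pow_mem (parryTransition_mem_rowStochastic hA hΛ hv hAv) m
  have hQ_pos : ∀ i j, 0 < parryTransition (A ^ m) (Λ ^ m) v i j := fun i j =>
    div_pos (mul_pos (hm i j) (hv j)) (mul_pos (pow_pos hΛ m) (hv i))
  set g : ℕ → ι → ℝ := fun k => parryTransition (A ^ m) (Λ ^ m) v ^ k *ᵥ v⁻¹
  have hcmp : ∀ k, v y * g k y ≤ v x * g k x := fun k => by
    simp only [g, parryTransition_pow (pow_ne_zero m hΛ.ne') hv₀, ← pow_mul, mul_comm (v _),
      parryTransition_mulVec_inv_apply_mul hv₀]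
    exact div_le_div_of_nonneg_right (hxy _) (pow_pos hΛ _).le
  have : Nonempty ι := ⟨x⟩
  obtain ⟨z₀, hz₀⟩ := Finite.exists_min v⁻¹
  have hg_ge : ∀ k z, v⁻¹ z₀ ≤ g k z := fun k =>
    le_mulVec_apply_of_mem_rowStochastic (pow_mem hQ k) hz₀
  have hosc := (tendsto_mulVec_pow_apply_sub_apply hQ hQ_pos v⁻¹ x y).const_mul (v x)
  rw [mul_zero] at hosc
  by_contra! hlt
  have hgap : 0 < (v y - v x) * v⁻¹ z₀ := mul_pos (sub_pos.2 hlt) (inv_pos.2 (hv z₀))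
  refine hgap.not_ge (ge_of_tendsto' hosc fun k => ?_)
  calc (v y - v x) * v⁻¹ z₀ ≤ (v y - v x) * g k y :=
        mul_le_mul_of_nonneg_left (hg_ge k y) (sub_nonneg.2 hlt.le)
    _ ≤ v x * (g k x - g k y) := by linarith [hcmp k]

theorem eventual_gaussian_stmt4_general (s : ℕ) (A : Matrix (Fin s) (Fin s) ℝ)
    (h01 : ∀ i j, A i j = 0 ∨ A i j = 1)
    (haper : ∃ m₀ : ℕ, ∀ m : ℕ, m₀ ≤ m → ∀ i j, 0 < (A ^ m) i j)
    (Λ : ℝ) (hΛ : 0 < Λ) (u v : Fin s → ℝ)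
    (hu : ∀ i, 0 < u i) (hv : ∀ i, 0 < v i)
    (hright : ∀ i, ∑ j, A i j * v j = Λ * v i)
    (n : ℕ) (hn : 0 < n) (J K : Fin n → Fin s)
    (hfirst : J ⟨0, hn⟩ = K ⟨0, hn⟩)
    (hrightext : ∀ i : ℕ,
      ∑ l, (A ^ i) (K ⟨n - 1, Nat.sub_lt hn one_pos⟩) l
        ≤ ∑ l, (A ^ i) (J ⟨n - 1, Nat.sub_lt hn one_pos⟩) l) :
    u (K ⟨0, hn⟩) * v (K ⟨n - 1, Nat.sub_lt hn one_pos⟩) / Λ ^ (n - 1)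
      ≤ u (J ⟨0, hn⟩) * v (J ⟨n - 1, Nat.sub_lt hn one_pos⟩) / Λ ^ (n - 1) := by
  have hA : ∀ i j, 0 ≤ A i j := fun i j => by rcases h01 i j with h | h <;> simp [h]
  obtain ⟨m₀, hm₀⟩ := haper
  have hlast := apply_le_apply_of_forall_sum_pow_apply_le hA (hm₀ m₀ le_rfl) hΛ hv
    (funext hright) hrightext
  rw [hfirst]
  gcongr
  exact (hu _).le

/-- Parry measure monotonicity: if admissible words `J`, `K` of length `n` share the same
first letter and `J` has at least as many admissible right-extensions of every length as
`K`, then `ν(cyl(J)) ≥ ν(cyl(K))` for the Parry measure `u_{J₁} v_{J_n} / Λ^{n−1}`. -/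
theorem eventual_gaussian_stmt4 (s : ℕ) (A : Matrix (Fin s) (Fin s) ℝ)
    (h01 : ∀ i j, A i j = 0 ∨ A i j = 1)
    (hirr : ∀ i j, ∃ m : ℕ, 0 < (A ^ m) i j)
    (haper : ∃ m₀ : ℕ, ∀ m : ℕ, m₀ ≤ m → ∀ i j, 0 < (A ^ m) i j)
    (Λ : ℝ) (hΛ : 0 < Λ) (u v : Fin s → ℝ)
    (hu : ∀ i, 0 < u i) (hv : ∀ i, 0 < v i)
    (hleft : ∀ j, ∑ i, u i * A i j = Λ * u j)
    (hright : ∀ i, ∑ j, A i j * v j = Λ * v i)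
    (hnorm : ∑ i, u i * v i = 1)
    (n : ℕ) (hn : 0 < n) (J K : Fin n → Fin s)
    (hJ : ∀ i : ℕ, ∀ h : i + 1 < n, A (J ⟨i, Nat.lt_of_succ_lt h⟩) (J ⟨i + 1, h⟩) = 1)
    (hK : ∀ i : ℕ, ∀ h : i + 1 < n, A (K ⟨i, Nat.lt_of_succ_lt h⟩) (K ⟨i + 1, h⟩) = 1)
    (hfirst : J ⟨0, hn⟩ = K ⟨0, hn⟩)
    (hrightext : ∀ i : ℕ,
      ∑ l, (A ^ i) (K ⟨n - 1, Nat.sub_lt hn one_pos⟩) l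
        ≤ ∑ l, (A ^ i) (J ⟨n - 1, Nat.sub_lt hn one_pos⟩) l) :
    u (K ⟨0, hn⟩) * v (K ⟨n - 1, Nat.sub_lt hn one_pos⟩) / Λ ^ (n - 1)
      ≤ u (J ⟨0, hn⟩) * v (J ⟨n - 1, Nat.sub_lt hn one_pos⟩) / Λ ^ (n - 1) :=
  eventual_gaussian_stmt4_general s A h01 haper Λ hΛ u v hu hv hright n hn J K hfirst hrightext
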